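/- arXiv:2504.00805 — 4 statements merged into one kernel-verified Lean document; each statement's English description precedes it below -/
import Mathlib

section
/- Define J on the upper half of ℝ² × ℝ⁴ (parameters ξ + iη with η ≥ 0) by the 4×4 matrix with rows (0,-1,0,0), (1,0,0,0), (0,η,0,-1), (η,0,1,0). Then J is an almost complex structure (J² = -Id), is real analytic for η ≥ 0, and its extension by reflection to η < 0 equals the matrix with rows (0,-1,0,0), (1,0,0,0), (0,-η,0,-1), (-η,0,1,0); hence the total extended structure on ℝ² is given by replacing η with |η|, which is Lipschitz-continuous but not C¹. -/
open Matrix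

noncomputable section

/-- The almost complex structure on the upper half space (`η ≥ 0`). -/
def Jup (η : ℝ) : Matrix (Fin 4) (Fin 4) ℝ :=
  !![0, -1, 0, 0; 1, 0, 0, 0; 0, η, 0, -1; η, 0, 1, 0]

/-- The claimed extension by reflection for `η < 0`. -/
def Jdown (η : ℝ) : Matrix (Fin 4) (Fin 4) ℝ :=
  !![0, -1, 0, 0; 1, 0, 0, 0; 0, -η, 0, -1; -η, 0, 1, 0]

/-- The total extended structure, with `η` replaced by `|η|`. -/
def Jtot (η : ℝ) : Matrix (Fin 4) (Fin 4) ℝ :=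
  !![0, -1, 0, 0; 1, 0, 0, 0; 0, |η|, 0, -1; |η|, 0, 1, 0]

/-- Coordinatewise complex conjugation on `ℝ⁴ ≅ ℂ²` (coordinates `x₁,y₁,x₂,y₂`). -/
def conjMat : Matrix (Fin 4) (Fin 4) ℝ :=
  !![1, 0, 0, 0; 0, -1, 0, 0; 0, 0, 1, 0; 0, 0, 0, -1]

/-!
Each entry of `Jup η` is either a constant or `η` itself, so `Jup` is analytic and its entries
are `1`-Lipschitz in `η`. Every nonzero entry sits where the diagonal signs of `conjMat` differ,
so `-(conjMat * Jup η * conjMat) = Jup η` and the reflection of `Jup` is just `Jup (-η)`; the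
glued structure is therefore `Jup |η|`. Its entries stay `1`-Lipschitz, but the entry `(2, 1)`
is `|η|`, which is not differentiable at `0`.
-/

lemma Jup_mul_self (η : ℝ) : Jup η * Jup η = -1 := by
  ext i j
  fin_cases i <;> fin_cases j <;> simp [Jup, Matrix.mul_apply, Fin.sum_univ_four]

lemma Jdown_eq_Jup_neg (η : ℝ) : Jdown η = Jup (-η) := by
  ext i j
  fin_cases i <;> fin_cases j <;> simp [Jup, Jdown]

lemma neg_conjMat_mul_Jup_mul_conjMat (η : ℝ) : -(conjMat * Jup η * conjMat) = Jup η := by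
  ext i j
  fin_cases i <;> fin_cases j <;> simp [Jup, conjMat]

lemma Jtot_eq_Jup_abs (η : ℝ) : Jtot η = Jup |η| := by
  ext i j
  fin_cases i <;> fin_cases j <;> simp [Jtot, Jup]

lemma Jtot_apply_two_one (η : ℝ) : Jtot η 2 1 = |η| := by
  simp [Jtot]

lemma Jup_apply_const_or_id (i j : Fin 4) :
    (∃ c : ℝ, ∀ η, Jup η i j = c) ∨ ∀ η, Jup η i j = η := by
  fin_cases i <;> fin_cases j <;> simp [Jup]

lemma analyticOnNhd_Jup_apply (i j : Fin 4) :
    AnalyticOnNhd ℝ (fun η : ℝ => Jup η i j) Set.univ := by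
  rcases Jup_apply_const_or_id i j with ⟨c, hc⟩ | hid
  · simpa only [hc] using analyticOnNhd_const
  · simpa only [hid] using analyticOnNhd_id

lemma lipschitzWith_one_Jup_apply (i j : Fin 4) : LipschitzWith 1 (fun η : ℝ => Jup η i j) := by
  rcases Jup_apply_const_or_id i j with ⟨c, hc⟩ | hid
  · simpa only [hc] using (LipschitzWith.const c).weaken zero_le_one
  · rw [show (fun η : ℝ => Jup η i j) = id from funext hid]
    exact LipschitzWith.id

lemma lipschitzWith_one_Jtot_apply (i j : Fin 4) : LipschitzWith 1 (fun η : ℝ => Jtot η i j) := by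
  simpa only [Jtot_eq_Jup_abs, mul_one, Function.comp_def, Real.norm_eq_abs] using
    (lipschitzWith_one_Jup_apply i j).comp (lipschitzWith_one_norm (E := ℝ))

lemma not_differentiableAt_Jtot_apply_two_one :
    ¬ DifferentiableAt ℝ (fun η : ℝ => Jtot η 2 1) 0 := by
  simpa only [Jtot_apply_two_one] using not_differentiableAt_abs_zero

/-- The example of a real-analytic almost complex structure whose extension by
reflection (`J̃(ζ)[v] = -conj (J(ζ̄)[v̄])`) is only Lipschitz-continuous:
`J` is a complex structure, real analytic in `η`, its reflection for `η < 0` is `Jdown`,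
the total extended structure is `Jtot` (replace `η` by `|η|`), which is Lipschitz but not
differentiable (hence not `C¹`) at `η = 0`. -/
theorem reflection_of_smooth_structure_only_lipschitz :
    (∀ η : ℝ, Jup η * Jup η = -1) ∧
    (∀ i j : Fin 4, AnalyticOn ℝ (fun η : ℝ => Jup η i j) (Set.Ici 0)) ∧
    (∀ η : ℝ, -(conjMat * Jup (-η) * conjMat) = Jdown η) ∧
    (∀ η : ℝ, 0 ≤ η → Jtot η = Jup η) ∧
    (∀ η : ℝ, η < 0 → Jtot η = Jdown η) ∧
    (∃ K : NNReal, ∀ i j : Fin 4, LipschitzWith K (fun η : ℝ => Jtot η i j)) ∧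
    ¬ (∀ i j : Fin 4, DifferentiableAt ℝ (fun η : ℝ => Jtot η i j) 0) := by
  refine ⟨Jup_mul_self, fun i j => ?_, fun η => ?_, fun η hη => ?_, fun η hη => ?_,
    ⟨1, lipschitzWith_one_Jtot_apply⟩, fun h => not_differentiableAt_Jtot_apply_two_one (h 2 1)⟩
  · exact ((analyticOnNhd_Jup_apply i j).mono (Set.subset_univ _)).analyticOn
  · rw [neg_conjMat_mul_Jup_mul_conjMat, Jdown_eq_Jup_neg]
  · rw [Jtot_eq_Jup_abs, abs_of_nonneg hη]
  · rw [Jtot_eq_Jup_abs, abs_of_neg hη, Jdown_eq_Jup_neg]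
end
end

section
/- For an ω_st-tamed linear complex structure J on ℝ^{2n}, set W = L(J) := -(J - J_st)(J + J_st)^{-1} = (1 + J J_st)(1 - J J_st)^{-1}. Then W is J_st-antilinear, i.e., W J_st = -J_st W, and satisfies 1 - Wᵗ W ≫ 0 (positive definite). Conversely, for any W ∈ End(ℝ^{2n}) with W J_st = -J_st W and 1 - Wᵗ W positive definite, the operator J = K(W) := J_st (1 + W)(1 - W)^{-1} is well defined, satisfies J² = -1, and is tamed by ω_st. The maps L and K are mutually inverse, and the set {W : W J_st = -J_st W, 1 - WᵗW ≫ 0} is convex with L(J_st) = 0. -/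
/-!
Write `P = J + J_st`. Tameness makes `P` invertible (a kernel vector `v` would give
`ω_st(v, Jv) = -|J_st v|²`), and `J² = J_st²` makes `P` anticommute with `J - J_st`, so that
`W = L(J) = P⁻¹ (J - J_st)`; then `P W = J - J_st` rearranges to `J (1 - W) = J_st (1 + W)`,
which is `K(W) = J`. Conversely, antilinearity gives `J_st (1 + W) = (1 - W) J_st`, so `K(W)` is
the conjugate `(1 - W) J_st (1 - W)⁻¹` of `J_st`. Both tameness statements come from one identity:
for `v = (1 - W) u`, `ω_st(v, K(W) v) = ⟨(1 - W) u, (1 + W) u⟩ = |u|² - |W u|²`, so `K(W)` is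
tamed iff `W` is a strict contraction, i.e. iff `1 - Wᵀ W ≫ 0`; this condition is convex since
`|·|²` is.
-/

open Matrix

noncomputable section

variable (n : ℕ)

/-- The standard complex structure `J_st` on `ℝ^{2n} = ℝⁿ × ℝⁿ` in block form. -/
def JstM : Matrix (Fin n ⊕ Fin n) (Fin n ⊕ Fin n) ℝ :=
  Matrix.fromBlocks 0 (-1) 1 0

/-- `J` is tamed by the standard symplectic form `ω_st = Σ dxᵢ ∧ dyᵢ`:
`ω_st(v, Jv) = ⟪J_st v, Jv⟫ > 0` for all `v ≠ 0`. -/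
def TamedBySt (J : Matrix (Fin n ⊕ Fin n) (Fin n ⊕ Fin n) ℝ) : Prop :=
  ∀ v : Fin n ⊕ Fin n → ℝ, v ≠ 0 → 0 < (JstM n).mulVec v ⬝ᵥ J.mulVec v

/-- The Cayley-type transform `L(J) = -(J - J_st)(J + J_st)⁻¹`. -/
def cayL (J : Matrix (Fin n ⊕ Fin n) (Fin n ⊕ Fin n) ℝ) :
    Matrix (Fin n ⊕ Fin n) (Fin n ⊕ Fin n) ℝ :=
  -(J - JstM n) * (J + JstM n)⁻¹

/-- The inverse transform `K(W) = J_st (1 + W)(1 - W)⁻¹`. -/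
def cayK (W : Matrix (Fin n ⊕ Fin n) (Fin n ⊕ Fin n) ℝ) :
    Matrix (Fin n ⊕ Fin n) (Fin n ⊕ Fin n) ℝ :=
  JstM n * (1 + W) * (1 - W)⁻¹

/-- The set `𝒲 = {W : W J_st = -J_st W, 1 - Wᵗ W ≫ 0}`. -/
def scrW : Set (Matrix (Fin n ⊕ Fin n) (Fin n ⊕ Fin n) ℝ) :=
  {W | W * JstM n = -(JstM n * W) ∧ (1 - Wᵀ * W).PosDef}


section StrictContraction

variable {ι : Type*} [Fintype ι]

theorem Matrix.dotProduct_self_smul_add_smul_le (x y : ι → ℝ) {a b : ℝ} (ha : 0 ≤ a) (hb : 0 ≤ b)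
    (hab : a + b = 1) :
    (a • x + b • y) ⬝ᵥ (a • x + b • y) ≤ a * (x ⬝ᵥ x) + b * (y ⬝ᵥ y) := by
  obtain rfl : b = 1 - a := by linarith
  have hxy : 0 ≤ (x - y) ⬝ᵥ (x - y) := by simpa using dotProduct_star_self_nonneg (x - y)
  simp only [add_dotProduct, dotProduct_add, smul_dotProduct, dotProduct_smul, sub_dotProduct,
    dotProduct_sub, smul_eq_mul, dotProduct_comm y x] at hxy ⊢
  nlinarith [mul_nonneg (mul_nonneg ha hb) hxy]

variable [DecidableEq ι]

theorem Matrix.nonsing_inv_mul_eq_mul_nonsing_inv {P X Y : Matrix ι ι ℝ} (hP : IsUnit P.det)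
    (h : X * P = P * Y) : P⁻¹ * X = Y * P⁻¹ :=
  calc P⁻¹ * X = P⁻¹ * (X * P) * P⁻¹ := by rw [mul_assoc P⁻¹, mul_nonsing_inv_cancel_right _ _ hP]
    _ = Y * P⁻¹ := by rw [h, nonsing_inv_mul_cancel_left _ _ hP]

theorem Matrix.dotProduct_one_sub_transpose_mul_self_mulVec (W : Matrix ι ι ℝ) (v : ι → ℝ) :
    v ⬝ᵥ (1 - Wᵀ * W) *ᵥ v = v ⬝ᵥ v - W *ᵥ v ⬝ᵥ W *ᵥ v := by
  rw [sub_mulVec, dotProduct_sub, one_mulVec, ← mulVec_mulVec, dotProduct_mulVec, vecMul_transpose]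

theorem Matrix.posDef_one_sub_transpose_mul_self_iff {W : Matrix ι ι ℝ} :
    (1 - Wᵀ * W).PosDef ↔ ∀ v ≠ 0, W *ᵥ v ⬝ᵥ W *ᵥ v < v ⬝ᵥ v := by
  have hW : (1 - Wᵀ * W).IsHermitian := by
    refine isHermitian_one.sub ?_
    simpa only [conjTranspose_eq_transpose_of_trivial] using isHermitian_conjTranspose_mul_self W
  simp only [posDef_iff_dotProduct_mulVec, hW, true_and, star_trivial,
    dotProduct_one_sub_transpose_mul_self_mulVec, sub_pos]

theorem Matrix.isUnit_det_one_sub_of_posDef {W : Matrix ι ι ℝ} (hW : (1 - Wᵀ * W).PosDef) :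
    IsUnit (1 - W).det := by
  rw [isUnit_iff_ne_zero, Ne, ← exists_mulVec_eq_zero_iff]
  rintro ⟨v, hv, hWv⟩
  rw [sub_mulVec, one_mulVec, sub_eq_zero] at hWv
  exact (posDef_one_sub_transpose_mul_self_iff.1 hW v hv).ne (by rw [← hWv])

theorem Matrix.convex_setOf_posDef_one_sub_transpose_mul_self :
    Convex ℝ {W : Matrix ι ι ℝ | (1 - Wᵀ * W).PosDef} := by
  intro W₁ h₁ W₂ h₂ a b ha hb hab
  simp only [Set.mem_ofPred_eq, posDef_one_sub_transpose_mul_self_iff] at h₁ h₂ ⊢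
  intro v hv
  rw [add_mulVec, smul_mulVec, smul_mulVec]
  exact (dotProduct_self_smul_add_smul_le _ _ ha hb hab).trans_lt
    (convex_Iio (v ⬝ᵥ v) (h₁ v hv) (h₂ v hv) ha hb hab)

theorem Matrix.convex_setOf_mul_eq_neg_mul (j : Matrix ι ι ℝ) :
    Convex ℝ {W : Matrix ι ι ℝ | W * j = -(j * W)} := by
  rintro W₁ (h₁ : W₁ * j = -(j * W₁)) W₂ (h₂ : W₂ * j = -(j * W₂)) a b - - -
  show (a • W₁ + b • W₂) * j = -(j * (a • W₁ + b • W₂))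
  simp only [add_mul, mul_add, smul_mul_assoc, mul_smul_comm, h₁, h₂, smul_neg, neg_add]

end StrictContraction

section Cayley

variable {n}

theorem JstM_mul_self : JstM n * JstM n = -1 := by
  simp [JstM, fromBlocks_multiply, ← fromBlocks_one, fromBlocks_neg]

theorem JstM_mul_JstM_mul (X : Matrix (Fin n ⊕ Fin n) (Fin n ⊕ Fin n) ℝ) :
    JstM n * (JstM n * X) = -X := by
  rw [← mul_assoc, JstM_mul_self, neg_one_mul]

theorem transpose_JstM : (JstM n)ᵀ = -JstM n := by
  simp [JstM, fromBlocks_transpose, fromBlocks_neg]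

theorem isUnit_det_JstM : IsUnit (JstM n).det :=
  isUnit_det_of_right_inverse (B := -JstM n) (by rw [mul_neg, JstM_mul_self, neg_neg])

theorem JstM_mulVec_dotProduct_JstM_mulVec (x y : Fin n ⊕ Fin n → ℝ) :
    JstM n *ᵥ x ⬝ᵥ JstM n *ᵥ y = x ⬝ᵥ y := by
  rw [dotProduct_mulVec, ← vecMul_transpose, vecMul_vecMul, transpose_JstM, neg_mul, JstM_mul_self,
    neg_neg, vecMul_one]

theorem TamedBySt.isUnit_det_add_JstM {J : Matrix (Fin n ⊕ Fin n) (Fin n ⊕ Fin n) ℝ}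
    (hT : TamedBySt n J) : IsUnit (J + JstM n).det := by
  rw [isUnit_iff_ne_zero, Ne, ← exists_mulVec_eq_zero_iff]
  rintro ⟨v, hv, hPv⟩
  rw [add_mulVec, add_eq_zero_iff_eq_neg] at hPv
  have h := hT v hv
  rw [hPv, dotProduct_neg, neg_pos] at h
  exact h.not_ge (by simpa using dotProduct_star_self_nonneg (JstM n *ᵥ v))

section cayK

variable {W : Matrix (Fin n ⊕ Fin n) (Fin n ⊕ Fin n) ℝ}

theorem cayK_mul_one_sub (hW : IsUnit (1 - W).det) : cayK n W * (1 - W) = JstM n * (1 + W) := by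
  rw [cayK, nonsing_inv_mul_cancel_right _ _ hW]

theorem cayK_eq_of_mul_one_sub_eq {J : Matrix (Fin n ⊕ Fin n) (Fin n ⊕ Fin n) ℝ}
    (hW : IsUnit (1 - W).det) (h : J * (1 - W) = JstM n * (1 + W)) : cayK n W = J := by
  rw [cayK, ← h, mul_nonsing_inv_cancel_right _ _ hW]

theorem tamedBySt_cayK_iff (hW : IsUnit (1 - W).det) :
    TamedBySt n (cayK n W) ↔ (1 - Wᵀ * W).PosDef := by
  have hC : IsUnit (1 - W) := (isUnit_iff_isUnit_det _).2 hW
  have hinj : Function.Injective (1 - W).mulVec := mulVec_injective_iff_isUnit.2 hC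
  have key (u : Fin n ⊕ Fin n → ℝ) :
      JstM n *ᵥ (1 - W) *ᵥ u ⬝ᵥ cayK n W *ᵥ (1 - W) *ᵥ u = u ⬝ᵥ u - W *ᵥ u ⬝ᵥ W *ᵥ u := by
    rw [mulVec_mulVec _ (cayK n W), cayK_mul_one_sub hW, ← mulVec_mulVec,
      JstM_mulVec_dotProduct_JstM_mulVec, sub_mulVec, add_mulVec, one_mulVec, sub_dotProduct,
      dotProduct_add, dotProduct_add, dotProduct_comm (W *ᵥ u) u]
    ring
  rw [posDef_one_sub_transpose_mul_self_iff, TamedBySt,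
    (mulVec_surjective_iff_isUnit.2 hC).forall]
  simp only [key, sub_pos, hinj.ne_iff' (mulVec_zero _)]

variable (hanti : W * JstM n = -(JstM n * W))
include hanti

theorem JstM_mul_one_add : JstM n * (1 + W) = (1 - W) * JstM n := by
  rw [mul_add, sub_mul, hanti]
  noncomm_ring

theorem cayK_mul_self (hW : IsUnit (1 - W).det) : cayK n W * cayK n W = -1 := by
  rw [cayK, JstM_mul_one_add hanti]
  calc (1 - W) * JstM n * (1 - W)⁻¹ * ((1 - W) * JstM n * (1 - W)⁻¹)
      = (1 - W) * (JstM n * JstM n) * (1 - W)⁻¹ := by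
        simp only [mul_assoc, nonsing_inv_mul_cancel_left _ _ hW]
    _ = -1 := by rw [JstM_mul_self, mul_neg_one, neg_mul, mul_nonsing_inv _ hW]

end cayK

theorem cayL_eq_of_mul_add_JstM {J W : Matrix (Fin n ⊕ Fin n) (Fin n ⊕ Fin n) ℝ}
    (hP : IsUnit (J + JstM n).det) (h : W * (J + JstM n) = -(J - JstM n)) : cayL n J = W := by
  rw [cayL, ← h, mul_nonsing_inv_cancel_right _ _ hP]

theorem cayL_eq_one_add_mul_one_sub_inv (J : Matrix (Fin n ⊕ Fin n) (Fin n ⊕ Fin n) ℝ) :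
    cayL n J = (1 + J * JstM n) * (1 - J * JstM n)⁻¹ := by
  have hnum : -(J - JstM n) = (1 + J * JstM n) * JstM n := by
    rw [add_mul, mul_assoc, JstM_mul_self]
    noncomm_ring
  have hden : J + JstM n = (1 - J * JstM n) * JstM n := by
    rw [sub_mul, mul_assoc, JstM_mul_self]
    noncomm_ring
  rw [cayL, hnum, hden, Matrix.mul_inv_rev, mul_assoc,
    mul_nonsing_inv_cancel_left _ _ isUnit_det_JstM]

section cayL

variable {J : Matrix (Fin n ⊕ Fin n) (Fin n ⊕ Fin n) ℝ} (hJ : J * J = -1)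
  (hP : IsUnit (J + JstM n).det)
include hJ hP

theorem cayL_eq_inv_mul : cayL n J = (J + JstM n)⁻¹ * (J - JstM n) := by
  have hanticomm : (J - JstM n) * (J + JstM n) = (J + JstM n) * -(J - JstM n) := by
    simp only [sub_mul, mul_add, add_mul, mul_sub, mul_neg, hJ, JstM_mul_self]
    abel
  rw [nonsing_inv_mul_eq_mul_nonsing_inv hP hanticomm, cayL]

theorem add_JstM_mul_cayL : (J + JstM n) * cayL n J = J - JstM n := by
  rw [cayL_eq_inv_mul hJ hP, mul_nonsing_inv_cancel_left _ _ hP]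

theorem isUnit_det_one_sub_cayL : IsUnit (1 - cayL n J).det := by
  have h : (J + JstM n) * (1 - cayL n J) = (2 : ℝ) • JstM n := by
    rw [mul_sub, mul_one, add_JstM_mul_cayL hJ hP, two_smul]
    abel
  have hdet : IsUnit ((J + JstM n) * (1 - cayL n J)).det := by
    rw [h, det_smul]
    exact (IsUnit.mk0 _ (by positivity)).mul isUnit_det_JstM
  rw [det_mul] at hdet
  exact isUnit_of_mul_isUnit_right hdet

theorem cayK_cayL : cayK n (cayL n J) = J := by
  refine cayK_eq_of_mul_one_sub_eq (isUnit_det_one_sub_cayL hJ hP) ?_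
  calc J * (1 - cayL n J) = J - (J + JstM n) * cayL n J + JstM n * cayL n J := by noncomm_ring
    _ = JstM n * (1 + cayL n J) := by rw [add_JstM_mul_cayL hJ hP]; noncomm_ring

theorem cayL_mul_JstM : cayL n J * JstM n = -(JstM n * cayL n J) := by
  have hcomm : (J * JstM n + 1) * (J + JstM n) = (J + JstM n) * (JstM n * J + 1) := by
    simp only [add_mul, mul_add, mul_one, one_mul, mul_assoc, JstM_mul_self, JstM_mul_JstM_mul]
    noncomm_ring
  conv_rhs => rw [cayL]
  calc cayL n J * JstM n = (J + JstM n)⁻¹ * (J * JstM n + 1) := by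
        rw [cayL_eq_inv_mul hJ hP, mul_assoc, sub_mul, JstM_mul_self, sub_neg_eq_add]
    _ = (JstM n * J + 1) * (J + JstM n)⁻¹ := nonsing_inv_mul_eq_mul_nonsing_inv hP hcomm
    _ = -(JstM n * (-(J - JstM n) * (J + JstM n)⁻¹)) := by
        rw [neg_mul, mul_neg, neg_neg, ← mul_assoc, mul_sub, JstM_mul_self, sub_neg_eq_add]

end cayL

theorem cayL_mem_scrW {J : Matrix (Fin n ⊕ Fin n) (Fin n ⊕ Fin n) ℝ} (hJ : J * J = -1)
    (hT : TamedBySt n J) : cayL n J ∈ scrW n := by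
  have hP := hT.isUnit_det_add_JstM
  refine ⟨cayL_mul_JstM hJ hP, ?_⟩
  rw [← tamedBySt_cayK_iff (isUnit_det_one_sub_cayL hJ hP), cayK_cayL hJ hP]
  exact hT

theorem cayL_cayK {W : Matrix (Fin n ⊕ Fin n) (Fin n ⊕ Fin n) ℝ}
    (hanti : W * JstM n = -(JstM n * W)) (hpd : (1 - Wᵀ * W).PosDef) :
    cayL n (cayK n W) = W := by
  have hW := isUnit_det_one_sub_of_posDef hpd
  have hT : TamedBySt n (cayK n W) := (tamedBySt_cayK_iff hW).2 hpd
  refine cayL_eq_of_mul_add_JstM hT.isUnit_det_add_JstM ?_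
  rw [← ((isUnit_iff_isUnit_det _).2 hW).mul_left_inj, mul_assoc, add_mul, neg_mul, sub_mul,
    cayK_mul_one_sub hW]
  simp only [mul_add, mul_sub, mul_one, ← mul_assoc, hanti]
  noncomm_ring

theorem convex_scrW : Convex ℝ (scrW n) :=
  (convex_setOf_mul_eq_neg_mul (JstM n)).inter convex_setOf_posDef_one_sub_transpose_mul_self

end Cayley

/-- The Cayley-transform parametrization of `ω_st`-tamed linear complex structures:
`L` maps tamed complex structures to `𝒲`, with the alternative formula
`L(J) = (1 + J J_st)(1 - J J_st)⁻¹`; `K` maps `𝒲` to tamed complex structures;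
`L` and `K` are mutually inverse; `𝒲` is convex and `L(J_st) = 0`. -/
theorem cayley_parametrization_of_tamed_structures :
    (∀ J : Matrix (Fin n ⊕ Fin n) (Fin n ⊕ Fin n) ℝ,
      J * J = -1 → TamedBySt n J →
        cayL n J = (1 + J * JstM n) * (1 - J * JstM n)⁻¹ ∧
        cayL n J ∈ scrW n ∧
        cayK n (cayL n J) = J) ∧
    (∀ W ∈ scrW n,
        cayK n W * cayK n W = -1 ∧ TamedBySt n (cayK n W) ∧
        cayL n (cayK n W) = W) ∧
    Convex ℝ (scrW n) ∧
    cayL n (JstM n) = 0 := by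
  refine ⟨fun J hJ hT => ?_, fun W ⟨hanti, hpd⟩ => ?_, convex_scrW, by simp [cayL]⟩
  · exact ⟨cayL_eq_one_add_mul_one_sub_inv J, cayL_mem_scrW hJ hT,
      cayK_cayL hJ hT.isUnit_det_add_JstM⟩
  · have hW := isUnit_det_one_sub_of_posDef hpd
    exact ⟨cayK_mul_self hanti hW, (tamedBySt_cayK_iff hW).2 hpd, cayL_cayK hanti hpd⟩
end
end

section
/- The function u₂(z₁) = exp(-1/z₁^{1/3}) is of class C^∞ on the closed sector S⁺ = {w ∈ Δ⁺ : 0 ≤ Arg w ≤ π/3} (after the substitution w = z₁^{1/3}), with all derivatives tending to 0 as z₁ → 0 in Δ⁺. Consequently, the analytic half-disks C₁ = Δ⁺ × {0} and C₂ = {(z₁, exp(-1/z₁^{1/3})) : z₁ ∈ Δ⁺} in ℂ² are tangent to each other at the boundary point 0 to infinite order. -/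
/-!
On the sector `|arg w| ≤ π/3` one has `Re w ≥ ‖w‖/2`, and inversion preserves the sector, so
`‖exp (-v)‖ ≤ exp (-‖v‖/2)` beats every power of `‖v‖` for `v = w⁻¹` (`w ∈ S⁺`) and for
`v = z^{-1/3}` (any `z`). If `v' = c vᵐ`, every complex derivative of `exp (-v)` is `Q(v) exp (-v)`
for a polynomial `Q`, and the real iterated derivatives of a holomorphic function have the same
norms as the complex ones. This settles everything except the real derivatives of `u₂` on the
negative real axis, across which `u₂` jumps. There a derivative is taken at a boundary point of the
upper half-plane: if it exists, the mean value inequality in the open half-plane and continuity at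
the point bound it by the derivatives nearby; if not, it is `0`.
-/

open Complex Metric Filter Asymptotics
open scoped Real Topology

noncomputable section

/-- The closed upper half of the unit disk `Δ⁺`. -/
def upperHalfDisk : Set ℂ := {z | z ∈ ball (0 : ℂ) 1 ∧ 0 ≤ z.im}

/-- The sector `S⁺ = {w ∈ Δ⁺ : 0 ≤ Arg w ≤ π/3}`. -/
def sectorS : Set ℂ := {w | w ∈ ball (0 : ℂ) 1 ∧ 0 ≤ w.arg ∧ w.arg ≤ π / 3}

/-- The second half-disk `C₂`'s graph function `u₂(z₁) = exp (-1/z₁^{1/3})`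
(principal cube root). -/
def u₂ (z : ℂ) : ℂ := Complex.exp (-(z ^ ((1 : ℂ) / 3))⁻¹)

lemma half_mul_norm_le_re_of_abs_arg_le {w : ℂ} (h : |arg w| ≤ π / 3) : 2⁻¹ * ‖w‖ ≤ w.re := by
  rcases eq_or_ne w 0 with rfl | hw
  · simp
  have hcos : Real.cos (π / 3) ≤ Real.cos (arg w) := by
    rw [← Real.cos_abs (arg w)]
    exact Real.cos_le_cos_of_nonneg_of_le_pi (abs_nonneg _) (by linarith [Real.pi_pos]) h
  rw [Real.cos_pi_div_three, cos_arg hw, le_div_iff₀ (norm_pos_iff.mpr hw)] at hcos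
  linarith

lemma abs_arg_inv {w : ℂ} (h : arg w ≠ π) : |arg w⁻¹| = |arg w| := by
  rw [arg_inv, if_neg h, abs_neg]

lemma arg_cpow_ofReal {z : ℂ} (hz : z ≠ 0) {y : ℝ} (hy₀ : 0 < y) (hy₁ : y ≤ 1) :
    arg (z ^ (y : ℂ)) = y * arg z := by
  have him : (log z * y).im = y * arg z := by simp [log_im, mul_comm]
  have hlo : y * -π < y * arg z := mul_lt_mul_of_pos_left (neg_pi_lt_arg z) hy₀
  have hhi : y * arg z ≤ y * π := mul_le_mul_of_nonneg_left (arg_le_pi z) hy₀.le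
  rw [cpow_def_of_ne_zero hz, arg_exp, him, toIocMod_eq_self]
  constructor <;> nlinarith [Real.pi_pos]

lemma abs_arg_cpow_one_third_le (z : ℂ) : |arg (z ^ (1 / 3 : ℂ))| ≤ π / 3 := by
  rcases eq_or_ne z 0 with rfl | hz
  · simp [zero_cpow]
    positivity
  have h := arg_cpow_ofReal hz (y := 1 / 3) (by norm_num) (by norm_num)
  push_cast at h
  rw [h, abs_mul, abs_of_pos (by norm_num : (0 : ℝ) < 1 / 3)]
  linarith [abs_arg_le_pi z]

lemma half_mul_norm_le_re_inv_cpow_one_third (z : ℂ) :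
    2⁻¹ * ‖(z ^ (1 / 3 : ℂ))⁻¹‖ ≤ (z ^ (1 / 3 : ℂ))⁻¹.re := by
  have h := abs_arg_cpow_one_third_le z
  refine half_mul_norm_le_re_of_abs_arg_le ?_
  rwa [abs_arg_inv ((le_abs_self _).trans h |>.trans_lt (by linarith [Real.pi_pos])).ne]

section Decay

variable {α : Type*} {l : Filter α} {v : α → ℂ} {b : ℝ}

lemma tendsto_pow_mul_exp_neg_of_mul_norm_le_re (hb : 0 < b)
    (hre : ∀ᶠ a in l, b * ‖v a‖ ≤ (v a).re) (hv : Tendsto (fun a => ‖v a‖) l atTop) (n : ℕ) :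
    Tendsto (fun a => v a ^ n * exp (-v a)) l (𝓝 0) := by
  have hmaj : Tendsto (fun a => ‖v a‖ ^ n * Real.exp (-b * ‖v a‖)) l (𝓝 0) := by
    simpa [Function.comp_def, Real.rpow_natCast] using
      (tendsto_rpow_mul_exp_neg_mul_atTop_nhds_zero n b hb).comp hv
  refine squeeze_zero_norm' ?_ hmaj
  filter_upwards [hre] with a ha
  rw [norm_mul, norm_pow, norm_exp, neg_re]
  gcongr
  linarith

open Polynomial in
lemma tendsto_eval_mul_exp_neg_of_mul_norm_le_re (hb : 0 < b)
    (hre : ∀ᶠ a in l, b * ‖v a‖ ≤ (v a).re) (hv : Tendsto (fun a => ‖v a‖) l atTop) (Q : ℂ[X]) :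
    Tendsto (fun a => Q.eval (v a) * exp (-v a)) l (𝓝 0) := by
  have h := tendsto_finsetSum (Finset.range (Q.natDegree + 1)) fun i _ =>
    (tendsto_pow_mul_exp_neg_of_mul_norm_le_re hb hre hv i).const_mul (Q.coeff i)
  simpa [eval_eq_sum_range, Finset.sum_mul, mul_assoc] using h

end Decay

open Polynomial in
lemma exists_iteratedDeriv_exp_neg_eq {A : Set ℂ} (hA : IsOpen A) {v : ℂ → ℂ} {c : ℂ} {m : ℕ}
    (hv : ∀ z ∈ A, HasDerivAt v (c * v z ^ m) z) (k : ℕ) :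
    ∃ Q : ℂ[X], ∀ z ∈ A,
      iteratedDeriv k (fun z => exp (-v z)) z = Q.eval (v z) * exp (-v z) := by
  induction k with
  | zero => exact ⟨1, fun z _ => by simp⟩
  | succ k ih =>
    obtain ⟨Q, hQ⟩ := ih
    refine ⟨C c * X ^ m * (derivative Q - Q), fun z hz => ?_⟩
    have hQv : HasDerivAt (fun z => Q.eval (v z) * exp (-v z))
        (Q.derivative.eval (v z) * (c * v z ^ m) * exp (-v z) +
          Q.eval (v z) * (exp (-v z) * -(c * v z ^ m))) z :=
      ((Q.hasDerivAt (v z)).comp z (hv z hz)).mul (hv z hz).neg.cexp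
    rw [iteratedDeriv_succ, (eventuallyEq_of_mem (hA.mem_nhds hz) hQ).deriv_eq, hQv.deriv]
    simp only [eval_mul, eval_C, eval_pow, eval_X, eval_sub]
    ring

lemma ContDiffAt.norm_iteratedFDeriv_real {F : Type*} [NormedAddCommGroup F] [NormedSpace ℂ F]
    {f : ℂ → F} {z : ℂ} {k : ℕ} (hf : ContDiffAt ℂ k f z) :
    ‖iteratedFDeriv ℝ k f z‖ = ‖iteratedDeriv k f z‖ := by
  rw [← hf.restrictScalars_iteratedFDeriv (𝕜 := ℝ), Function.comp_apply,
    ContinuousMultilinearMap.norm_restrictScalars, norm_iteratedFDeriv_eq_norm_iteratedDeriv]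

lemma tendsto_iteratedFDeriv_exp_neg {A : Set ℂ} (hA : IsOpen A) {v : ℂ → ℂ} {c : ℂ} {m : ℕ}
    (hv : ∀ z ∈ A, HasDerivAt v (c * v z ^ m) z) {l : Filter ℂ} (hlA : ∀ᶠ z in l, z ∈ A)
    {b : ℝ} (hb : 0 < b) (hre : ∀ᶠ z in l, b * ‖v z‖ ≤ (v z).re)
    (hnorm : Tendsto (fun z => ‖v z‖) l atTop) (k : ℕ) :
    Tendsto (iteratedFDeriv ℝ k fun z => exp (-v z)) l (𝓝 0) := by
  obtain ⟨Q, hQ⟩ := exists_iteratedDeriv_exp_neg_eq hA hv k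
  have hsmooth : ContDiffOn ℂ k (fun z => exp (-v z)) A :=
    (DifferentiableOn.cexp fun z hz =>
      (hv z hz).differentiableAt.differentiableWithinAt.neg).contDiffOn hA
  refine squeeze_zero_norm' ?_
    (tendsto_zero_iff_norm_tendsto_zero.mp
      (tendsto_eval_mul_exp_neg_of_mul_norm_le_re hb hre hnorm Q))
  filter_upwards [hlA] with z hz
  rw [(hsmooth.contDiffAt (hA.mem_nhds hz)).norm_iteratedFDeriv_real, hQ z hz]

lemma tendsto_iteratedFDeriv_succ_zero_iff {𝕜 E F : Type*} [NontriviallyNormedField 𝕜]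
    [NormedAddCommGroup E] [NormedSpace 𝕜 E] [NormedAddCommGroup F] [NormedSpace 𝕜 F]
    {l : Filter E} {f : E → F} {n : ℕ} :
    Tendsto (iteratedFDeriv 𝕜 (n + 1) f) l (𝓝 0) ↔
      Tendsto (fderiv 𝕜 (iteratedFDeriv 𝕜 n f)) l (𝓝 0) := by
  refine tendsto_zero_iff_norm_tendsto_zero.trans (Iff.trans ?_
    (tendsto_zero_iff_norm_tendsto_zero (f := fderiv 𝕜 (iteratedFDeriv 𝕜 n f))).symm)
  simp only [norm_fderiv_iteratedFDeriv]

section BoundaryDerivative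

variable {E F : Type*} [NormedAddCommGroup E] [NormedSpace ℝ E]
  [NormedAddCommGroup F] [NormedSpace ℝ F]

lemma HasFDerivAt.norm_apply_le_of_ray {g : E → F} {L : E →L[ℝ] F} {x e : E}
    (hg : HasFDerivAt g L x) {C : ℝ}
    (h : ∀ᶠ t in 𝓝[>] (0 : ℝ), ‖g (x + t • e) - g x‖ ≤ C * (t * ‖e‖)) : ‖L e‖ ≤ C * ‖e‖ := by
  refine le_of_tendsto (hg.hasLineDerivAt e).tendsto_slope_zero_right.norm ?_
  filter_upwards [h, self_mem_nhdsWithin] with t ht (ht₀ : 0 < t)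
  rw [norm_smul, norm_inv, Real.norm_of_nonneg ht₀.le, inv_mul_le_iff₀ ht₀]
  linarith

lemma ContinuousLinearMap.opNorm_le_of_forall_im_pos {L : ℂ →L[ℝ] F} {C : ℝ} (hC : 0 ≤ C)
    (h : ∀ e : ℂ, 0 < e.im → ‖L e‖ ≤ C * ‖e‖) : ‖L‖ ≤ C := by
  have hclosed : IsClosed {e : ℂ | ‖L e‖ ≤ C * ‖e‖} := isClosed_le (by fun_prop) (by fun_prop)
  have hupper : {e : ℂ | 0 ≤ e.im} ⊆ {e : ℂ | ‖L e‖ ≤ C * ‖e‖} := by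
    rw [← closure_setOfPred_lt_im]
    exact hclosed.closure_subset_iff.mpr h
  refine L.opNorm_le_bound hC fun e => ?_
  rcases le_or_gt 0 e.im with he | he
  · exact hupper he
  · simpa using hupper (show 0 ≤ (-e).im by simp; linarith)

lemma norm_fderiv_le_of_forall_im_pos {g : ℂ → F} {U : Set ℂ} (hU : IsOpen U)
    (hUc : Convex ℝ U) {z₀ : ℂ} (hz₀ : z₀ ∈ U) (him : 0 ≤ z₀.im) {C : ℝ} (hC : 0 ≤ C)
    (hg : ∀ z ∈ U, 0 < z.im → DifferentiableAt ℝ g z ∧ ‖fderiv ℝ g z‖ ≤ C) :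
    ‖fderiv ℝ g z₀‖ ≤ C := by
  by_cases hd : DifferentiableAt ℝ g z₀
  swap
  · rwa [fderiv_zero_of_not_differentiableAt hd, norm_zero]
  set s := U ∩ {z : ℂ | 0 < z.im}
  have hlip : ∀ x ∈ s, ∀ y ∈ s, ‖g x - g y‖ ≤ C * ‖x - y‖ := fun x hx y hy =>
    (hUc.inter (convex_halfSpace_im_gt 0)).norm_image_sub_le_of_norm_fderiv_le
      (fun z hz => (hg z hz.1 hz.2).1) (fun z hz => (hg z hz.1 hz.2).2) hy hx
  have hz₀s : z₀ ∈ closure s :=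
    hU.inter_closure ⟨hz₀, by rwa [closure_setOfPred_lt_im]⟩
  have hlip₀ : ∀ x ∈ s, ‖g x - g z₀‖ ≤ C * ‖x - z₀‖ := fun x hx =>
    ContinuousWithinAt.closure_le hz₀s
      (hd.continuousAt.continuousWithinAt.const_sub (g x)).norm
      ((continuousWithinAt_const.sub continuousWithinAt_id).norm.const_mul C) (hlip x hx)
  refine ContinuousLinearMap.opNorm_le_of_forall_im_pos hC fun e he =>
    hd.hasFDerivAt.norm_apply_le_of_ray ?_
  have hU' : ∀ᶠ t in 𝓝 (0 : ℝ), z₀ + t • e ∈ U :=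
    (Continuous.tendsto (by fun_prop) 0).eventually (by simpa using hU.mem_nhds hz₀)
  filter_upwards [nhdsWithin_le_nhds hU', self_mem_nhdsWithin] with t htU (ht : 0 < t)
  have hts : z₀ + t • e ∈ s := ⟨htU, by simp; positivity⟩
  simpa [norm_smul, abs_of_pos ht] using hlip₀ _ hts

lemma tendsto_fderiv_nhdsWithin_im_nonneg {g : ℂ → F} {x : ℂ}
    (hg : ∀ z : ℂ, 0 < z.im → DifferentiableAt ℝ g z)
    (h : Tendsto (fderiv ℝ g) (𝓝[{z | 0 < z.im}] x) (𝓝 0)) :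
    Tendsto (fderiv ℝ g) (𝓝[{z | 0 ≤ z.im}] x) (𝓝 0) := by
  rw [NormedAddGroup.tendsto_nhds_zero] at h ⊢
  intro ε hε
  obtain ⟨δ, hδ, hball⟩ := Metric.mem_nhdsWithin_iff.mp (h (ε / 2) (half_pos hε))
  filter_upwards [inter_mem_nhdsWithin _ (ball_mem_nhds x hδ)] with z ⟨hz, hzball⟩
  refine lt_of_le_of_lt ?_ (half_lt_self hε)
  exact norm_fderiv_le_of_forall_im_pos isOpen_ball (convex_ball x δ) hzball hz
    (half_pos hε).le fun w hw hwim => ⟨hg w hwim, (hball ⟨hw, hwim⟩).le⟩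

end BoundaryDerivative

lemma inv_cpow_one_third_pow_three (z : ℂ) : (z ^ (1 / 3 : ℂ))⁻¹ ^ 3 = z⁻¹ := by
  have h := cpow_nat_inv_pow z (n := 3) three_ne_zero
  push_cast at h
  rw [inv_pow, one_div, h]

lemma hasDerivAt_inv_cpow_one_third {z : ℂ} (hz : z ∈ slitPlane) :
    HasDerivAt (fun z : ℂ => (z ^ (1 / 3 : ℂ))⁻¹) (-(1 / 3) * (z ^ (1 / 3 : ℂ))⁻¹ ^ 4) z := by
  have hz₀ : z ≠ 0 := slitPlane_ne_zero hz
  have hu₀ : z ^ (1 / 3 : ℂ) ≠ 0 := by simp [hz₀]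
  refine ((hasStrictDerivAt_cpow_const hz).hasDerivAt.inv hu₀).congr_deriv ?_
  have hcube : z⁻¹ = (z ^ (1 / 3 : ℂ))⁻¹ ^ 3 := (inv_cpow_one_third_pow_three z).symm
  rw [cpow_sub _ _ hz₀, cpow_one, div_eq_mul_inv _ z, hcube]
  field_simp

lemma tendsto_norm_inv_cpow_one_third :
    Tendsto (fun z : ℂ => ‖(z ^ (1 / 3 : ℂ))⁻¹‖) (𝓝[≠] 0) atTop := by
  have h : (fun z : ℂ => ‖(z ^ (1 / 3 : ℂ))⁻¹‖) = fun z => ‖z⁻¹‖ ^ ((3 : ℕ)⁻¹ : ℝ) := by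
    ext z
    rw [← inv_cpow_one_third_pow_three z, norm_pow,
      Real.pow_rpow_inv_natCast (norm_nonneg _) three_ne_zero]
  rw [h]
  exact (tendsto_rpow_atTop (by norm_num)).comp tendsto_norm_inv_nhdsNE_zero_atTop

lemma differentiableOn_u₂ : DifferentiableOn ℂ u₂ slitPlane := fun _ hz =>
  (hasDerivAt_inv_cpow_one_third hz).differentiableAt.neg.cexp.differentiableWithinAt

lemma tendsto_iteratedFDeriv_u₂_slitPlane (k : ℕ) :
    Tendsto (iteratedFDeriv ℝ k u₂) (𝓝[slitPlane] 0) (𝓝 0) :=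
  tendsto_iteratedFDeriv_exp_neg isOpen_slitPlane (fun _ hz => hasDerivAt_inv_cpow_one_third hz)
    self_mem_nhdsWithin (by norm_num : (0 : ℝ) < 2⁻¹)
    (.of_forall half_mul_norm_le_re_inv_cpow_one_third)
    (tendsto_norm_inv_cpow_one_third.mono_left
      (nhdsWithin_mono _ fun _ hz => slitPlane_ne_zero hz)) k

lemma tendsto_pow_mul_u₂ (n : ℕ) :
    Tendsto (fun z : ℂ => (z ^ (1 / 3 : ℂ))⁻¹ ^ n * u₂ z) (𝓝[≠] 0) (𝓝 0) :=
  tendsto_pow_mul_exp_neg_of_mul_norm_le_re (by norm_num : (0 : ℝ) < 2⁻¹)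
    (.of_forall half_mul_norm_le_re_inv_cpow_one_third) tendsto_norm_inv_cpow_one_third n

lemma tendsto_iteratedFDeriv_u₂ :
    ∀ k : ℕ, Tendsto (iteratedFDeriv ℝ k u₂) (𝓝[{z | 0 ≤ z.im} \ {0}] 0) (𝓝 0)
  | 0 => by
    rw [tendsto_zero_iff_norm_tendsto_zero]
    simpa using (tendsto_zero_iff_norm_tendsto_zero.mp (tendsto_pow_mul_u₂ 0)).mono_left
      (nhdsWithin_mono _ fun _ hz => hz.2)
  | j + 1 => by
    have hsmooth : ContDiffOn ℝ ⊤ u₂ slitPlane :=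
      (differentiableOn_u₂.contDiffOn isOpen_slitPlane).restrict_scalars ℝ
    have hupper : {z : ℂ | 0 < z.im} ⊆ slitPlane := fun _ hz =>
      mem_slitPlane_iff.mpr (.inr hz.ne')
    rw [tendsto_iteratedFDeriv_succ_zero_iff]
    refine (tendsto_fderiv_nhdsWithin_im_nonneg (fun z hz => ?_) ?_).mono_left
      (nhdsWithin_mono _ Set.sdiff_subset)
    · exact (hsmooth.contDiffAt (isOpen_slitPlane.mem_nhds (hupper hz)))
        |>.differentiableAt_iteratedFDeriv (WithTop.coe_lt_top _)
    · exact (tendsto_iteratedFDeriv_succ_zero_iff.mp (tendsto_iteratedFDeriv_u₂_slitPlane (j + 1)))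
        |>.mono_left (nhdsWithin_mono _ hupper)

lemma u₂_isBigO_pow (m : ℕ) : u₂ =O[𝓝[≠] 0] fun z => z ^ m := by
  refine (((tendsto_pow_mul_u₂ (3 * m)).isBigO_one ℂ).mul
    (isBigO_refl (fun z : ℂ => z ^ m) _)).congr' ?_ (.of_forall fun _ => one_mul _)
  filter_upwards [self_mem_nhdsWithin] with z (hz : z ≠ 0)
  rw [pow_mul, inv_cpow_one_third_pow_three, mul_right_comm, ← mul_pow, inv_mul_cancel₀ hz,
    one_pow, one_mul]

lemma tendsto_iteratedFDeriv_exp_neg_inv_sectorS (k : ℕ) :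
    Tendsto (iteratedFDeriv ℝ k fun w : ℂ => exp (-w⁻¹)) (𝓝[sectorS \ {0}] 0) (𝓝 0) := by
  have hv : ∀ w ∈ ({0}ᶜ : Set ℂ), HasDerivAt (fun w : ℂ => w⁻¹) (-1 * w⁻¹ ^ 2) w :=
    fun w hw => by simpa [inv_pow] using hasDerivAt_inv hw
  refine tendsto_iteratedFDeriv_exp_neg isOpen_compl_singleton hv
    (eventually_mem_nhdsWithin.mono fun w hw => hw.2) (by norm_num : (0 : ℝ) < 2⁻¹)
    (eventually_mem_nhdsWithin.mono fun w hw => ?_)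
    (tendsto_norm_inv_nhdsNE_zero_atTop.mono_left (nhdsWithin_mono _ fun w hw => hw.2)) k
  obtain ⟨-, harg₀, harg⟩ := hw.1
  refine half_mul_norm_le_re_of_abs_arg_le ?_
  rw [abs_arg_inv (by linarith [Real.pi_pos]), abs_of_nonneg harg₀]
  exact harg

/-- Analytic half-disks can touch to infinite order at a boundary point:
`e^{-1/w}` has all derivatives tending to `0` as `w → 0` in the sector `S⁺`; after the
substitution `w = z^{1/3}` the same holds for `u₂` on `Δ⁺`, so the half-disks
`C₁ = Δ⁺ × {0}` and `C₂ = {(z, u₂ z)}` are tangent at `0` to infinite order: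
`u₂(z) = O(|z|^m)` for every `m`. -/
theorem infinite_order_boundary_tangency :
    (∀ k : ℕ,
      Tendsto (fun w => iteratedFDeriv ℝ k (fun w : ℂ => Complex.exp (-w⁻¹)) w)
        (𝓝[sectorS \ {0}] 0) (𝓝 0)) ∧
    (∀ k : ℕ,
      Tendsto (fun z => iteratedFDeriv ℝ k u₂ z)
        (𝓝[upperHalfDisk \ {0}] 0) (𝓝 0)) ∧
    (∀ m : ℕ, (fun z => u₂ z) =O[𝓝[upperHalfDisk \ {0}] 0] (fun z => z ^ m)) :=
  ⟨tendsto_iteratedFDeriv_exp_neg_inv_sectorS,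
    fun k => (tendsto_iteratedFDeriv_u₂ k).mono_left
      (nhdsWithin_mono _ fun _ hz => ⟨hz.1.2, hz.2⟩),
    fun m => (u₂_isBigO_pow m).mono (nhdsWithin_mono _ fun _ hz => hz.2)⟩
end
end

section
/- Let u₀ : (Δ, 0) → (ℝ^{2n}, 0) satisfy the normal form u₀(ζ) = ζ^μ P(ζ) + ζ^{2μ-1} v(ζ) with P a polynomial of degree ≤ μ - 1, P(0) = v₀ ≠ 0, v ∈ L^{1,p}_loc with v(0) = 0 and the estimates ‖d(ζv)‖ = O(|ζ|^α). Then the differential satisfies du₀(ζ) = μ v₀ ζ^{μ-1} + O(|ζ|^{μ-1+α}) as ζ → 0, for any 0 < α < 1 with α = 1 - 2/p. -/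
/-!
Write `u₀(ζ) = ζ^μ P(ζ) + ζ^{2μ-2} w(ζ)` with `w(ζ) = ζ v(ζ)`, and differentiate each term by
the Leibniz rule `d(ζ^k F) = ζ^k dF + k ζ^{k-1} F`. Since `dw = O(|ζ|^α)`, the mean value
inequality gives `w = O(|ζ|^{1+α})`, so `d(ζ^{2μ-2} w) = O(|ζ|^{2μ-2+α})`. Likewise `dP = O(1)`
and `P - v₀ = O(|ζ|)`, so `d(ζ^μ P) = μ v₀ ζ^{μ-1} + O(|ζ|^μ)`. Both error exponents are at least
`μ - 1 + α` because `μ ≥ 1` and `α ≤ 1`.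
-/

open Complex Metric Filter Asymptotics
open scoped Topology

noncomputable section

abbrev Cn (n : ℕ) := EuclideanSpace ℂ (Fin n)

/-- The real-linear map `ℂ → ℂⁿ`, `w ↦ (c w) • v₀`. -/
def mulSmul (n : ℕ) (c : ℂ) (v₀ : Cn n) : ℂ →L[ℝ] Cn n :=
  (ContinuousLinearMap.id ℝ ℂ).smulRight (c • v₀)

theorem isBigO_norm_rpow_of_le {E : Type*} [SeminormedAddCommGroup E] {s t : ℝ}
    (ht : 0 ≤ t) (hts : t ≤ s) :
    (fun x : E => ‖x‖ ^ s) =O[𝓝 0] fun x => ‖x‖ ^ t :=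
  (IsBigO.rpow_rpow_nhdsGE_zero_of_le_of_imp hts fun hs => by linarith).comp_tendsto
    (tendsto_nhdsWithin_iff.2 ⟨tendsto_norm_zero, .of_forall fun x => norm_nonneg x⟩)

theorem fderiv_eventuallyEq_add {E F : Type*} [NormedAddCommGroup E] [NormedSpace ℝ E]
    [NormedAddCommGroup F] [NormedSpace ℝ F] {u f g : E → F} {x₀ : E}
    (hu : u =ᶠ[𝓝 x₀] fun x => f x + g x) (hf : ∀ᶠ x in 𝓝 x₀, DifferentiableAt ℝ f x)
    (hg : ∀ᶠ x in 𝓝 x₀, DifferentiableAt ℝ g x) :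
    (fun x => fderiv ℝ u x) =ᶠ[𝓝 x₀] fun x => fderiv ℝ f x + fderiv ℝ g x := by
  filter_upwards [hu.eventuallyEq_nhds, hf, hg] with x hux hfx hgx
  rw [hux.fderiv_eq, fderiv_fun_add hfx hgx]

theorem sub_isBigO_rpow_of_fderiv_isBigO {E F : Type*} [NormedAddCommGroup E] [NormedSpace ℝ E]
    [NormedAddCommGroup F] [NormedSpace ℝ F] {f : E → F} {β : ℝ} (hβ : 0 ≤ β)
    (hdiff : ∀ᶠ x in 𝓝 0, DifferentiableAt ℝ f x)
    (hf' : (fun x => fderiv ℝ f x) =O[𝓝 0] fun x => ‖x‖ ^ β) :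
    (fun x => f x - f 0) =O[𝓝 0] fun x => ‖x‖ ^ (β + 1) := by
  obtain ⟨c, hc, hbound⟩ := hf'.exists_nonneg
  obtain ⟨r, hr, hball⟩ := Metric.eventually_nhds_iff_ball.1 (hdiff.and hbound.bound)
  refine IsBigO.of_bound c ?_
  filter_upwards [ball_mem_nhds 0 hr] with x hx
  have hsub : closedBall (0 : E) ‖x‖ ⊆ ball 0 r :=
    closedBall_subset_ball (by simpa using hx)
  have hderiv : ∀ y ∈ closedBall (0 : E) ‖x‖, ‖fderiv ℝ f y‖ ≤ c * ‖x‖ ^ β := by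
    intro y hy
    have hyx : ‖y‖ ≤ ‖x‖ := by simpa using hy
    calc ‖fderiv ℝ f y‖ ≤ c * ‖‖y‖ ^ β‖ := (hball y (hsub hy)).2
      _ ≤ c * ‖x‖ ^ β := by
        rw [Real.norm_of_nonneg (by positivity)]
        gcongr
  have hmvt := (convex_closedBall (0 : E) ‖x‖).norm_image_sub_le_of_norm_fderiv_le
    (fun y hy => (hball y (hsub hy)).1) hderiv (mem_closedBall_self (norm_nonneg x))
    (mem_closedBall_zero_iff.2 le_rfl)
  rw [Real.norm_of_nonneg (by positivity), Real.rpow_add_one' (norm_nonneg x) (by linarith)]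
  simpa [mul_assoc] using hmvt

section PowSmul

variable {E : Type*} [NormedAddCommGroup E] [NormedSpace ℂ E]

theorem hasFDerivAt_pow_smul {F : ℂ → E} {F' : ℂ →L[ℝ] E} {z : ℂ} (k : ℕ)
    (hF : HasFDerivAt F F' z) :
    HasFDerivAt (fun z => z ^ k • F z)
      (z ^ k • F' + (ContinuousLinearMap.id ℝ ℂ).smulRight (((k : ℂ) * z ^ (k - 1)) • F z)) z := by
  refine (((hasDerivAt_pow k z).hasFDerivAt.restrictScalars ℝ).fun_smul hF).congr_fderiv ?_
  ext w
  simp [smul_smul]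

theorem norm_id_smulRight_le (v : E) : ‖(ContinuousLinearMap.id ℝ ℂ).smulRight v‖ ≤ ‖v‖ :=
  ContinuousLinearMap.opNorm_le_bound _ (norm_nonneg v) fun w => by
    simp [norm_smul, mul_comm]

theorem norm_natCast_mul_pow_pred_mul_norm (k : ℕ) (z : ℂ) :
    ‖(k : ℂ) * z ^ (k - 1)‖ * ‖z‖ = k * ‖z‖ ^ k := by
  cases k with
  | zero => simp
  | succ k =>
    rw [norm_mul, Complex.norm_natCast, norm_pow, Nat.add_sub_cancel, pow_succ]
    ring

theorem fderiv_pow_smul_sub_isBigO {F : ℂ → E} {β : ℝ} (k : ℕ) (hβ : 0 ≤ β)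
    (hdiff : ∀ᶠ z in 𝓝 0, DifferentiableAt ℝ F z)
    (hF' : (fun z => fderiv ℝ F z) =O[𝓝 0] fun z => ‖z‖ ^ β) :
    (fun z => fderiv ℝ (fun z => z ^ k • F z) z -
        (ContinuousLinearMap.id ℝ ℂ).smulRight (((k : ℂ) * z ^ (k - 1)) • F 0))
      =O[𝓝 0] fun z => ‖z‖ ^ ((k : ℝ) + β) := by
  have hsplit : ∀ᶠ z in 𝓝 0, fderiv ℝ (fun z => z ^ k • F z) z -
        (ContinuousLinearMap.id ℝ ℂ).smulRight (((k : ℂ) * z ^ (k - 1)) • F 0) =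
      z ^ k • fderiv ℝ F z +
        (ContinuousLinearMap.id ℝ ℂ).smulRight (((k : ℂ) * z ^ (k - 1)) • (F z - F 0)) := by
    filter_upwards [hdiff] with z hz
    rw [(hasFDerivAt_pow_smul k hz.hasFDerivAt).fderiv, add_sub_assoc, smul_sub]
    congr 1
    ext w
    simp [smul_sub]
  have hmain : (fun z => z ^ k • fderiv ℝ F z) =O[𝓝 0] fun z => ‖z‖ ^ k * ‖z‖ ^ β :=
    (isBigO_norm_right.2 (isBigO_refl _ _)).smul hF' |>.congr_right fun z => by simp
  have hcorr : (fun z => (ContinuousLinearMap.id ℝ ℂ).smulRight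
        (((k : ℂ) * z ^ (k - 1)) • (F z - F 0))) =O[𝓝 0] fun z => ‖z‖ ^ k * ‖z‖ ^ β := by
    have hsmul := (isBigO_norm_right.2 (isBigO_refl (fun z : ℂ => (k : ℂ) * z ^ (k - 1)) _)).smul
      (sub_isBigO_rpow_of_fderiv_isBigO hβ hdiff hF')
    refine (IsBigO.of_bound 1 (.of_forall fun z => ?_)).trans (hsmul.trans (.of_bound k ?_))
    · simpa using norm_id_smulRight_le _
    · filter_upwards with z
      rw [smul_eq_mul, Real.rpow_add_one' (norm_nonneg z) (by linarith),
        Real.norm_of_nonneg (by positivity : 0 ≤ ‖(k : ℂ) * z ^ (k - 1)‖ * (‖z‖ ^ β * ‖z‖)),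
        Real.norm_of_nonneg (by positivity : (0 : ℝ) ≤ ‖z‖ ^ k * ‖z‖ ^ β)]
      refine le_of_eq ?_
      calc ‖(k : ℂ) * z ^ (k - 1)‖ * (‖z‖ ^ β * ‖z‖)
          = (‖(k : ℂ) * z ^ (k - 1)‖ * ‖z‖) * ‖z‖ ^ β := by ring
        _ = k * (‖z‖ ^ k * ‖z‖ ^ β) := by rw [norm_natCast_mul_pow_pred_mul_norm]; ring
  refine ((hmain.add hcorr).congr' (EventuallyEq.symm hsplit) .rfl).congr_right fun z => ?_
  rw [Real.rpow_add_of_nonneg (norm_nonneg z) (Nat.cast_nonneg k) hβ, Real.rpow_natCast]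

theorem fderiv_pow_smul_sub_isBigO_of_contDiff {F : ℂ → E} (k : ℕ) (hF : ContDiff ℝ 1 F) :
    (fun z => fderiv ℝ (fun z => z ^ k • F z) z -
        (ContinuousLinearMap.id ℝ ℂ).smulRight (((k : ℂ) * z ^ (k - 1)) • F 0))
      =O[𝓝 0] fun z => ‖z‖ ^ (k : ℝ) := by
  have hF' : (fun z => fderiv ℝ F z) =O[𝓝 0] fun z => ‖z‖ ^ (0 : ℝ) :=
    ((hF.continuous_fderiv one_ne_zero).tendsto 0).isBigO_one ℝ |>.congr_right fun z => by simp
  simpa using fderiv_pow_smul_sub_isBigO k le_rfl (.of_forall (hF.differentiable one_ne_zero)) hF'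

end PowSmul

theorem sum_zero_pow_smul {E : Type*} [AddCommMonoid E] [Module ℂ E] {μ : ℕ} (hμ : 0 < μ)
    (a : Fin μ → E) : ∑ i : Fin μ, (0 : ℂ) ^ (i : ℕ) • a i = a ⟨0, hμ⟩ := by
  refine (Finset.sum_eq_single ⟨0, hμ⟩ (fun i _ hi => ?_) (by simp)).trans (by simp)
  rw [zero_pow (fun h => hi (Fin.ext h)), zero_smul]

theorem differentiated_normal_form_general
    (n : ℕ) (p : ℝ) (hp : 2 < p) (α : ℝ) (hα : α = 1 - 2 / p)
    (μ : ℕ) (hμ : 1 ≤ μ)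
    (a : Fin μ → Cn n) (v₀ : Cn n)
    (hP0 : a ⟨0, hμ⟩ = v₀)
    (v u₀ : ℂ → Cn n)
    (hvdiff : ∀ᶠ ζ in 𝓝 (0 : ℂ), DifferentiableAt ℝ (fun z : ℂ => z • v z) ζ)
    (hvest : (fun ζ => fderiv ℝ (fun z : ℂ => z • v z) ζ)
      =O[𝓝 (0 : ℂ)] (fun ζ => ‖ζ‖ ^ α))
    (hform : ∀ᶠ ζ in 𝓝 (0 : ℂ),
      u₀ ζ = ζ ^ μ • (∑ i : Fin μ, ζ ^ (i : ℕ) • a i) + ζ ^ (2 * μ - 1) • v ζ) :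
    (fun ζ : ℂ => fderiv ℝ u₀ ζ - mulSmul n ((μ : ℂ) * ζ ^ (μ - 1)) v₀)
      =O[𝓝 (0 : ℂ)] (fun ζ => ‖ζ‖ ^ ((μ : ℝ) - 1 + α)) := by
  have hα0 : 0 < α := by
    rw [hα, sub_pos, div_lt_one (by linarith)]
    exact hp
  have hα1 : α ≤ 1 := by
    rw [hα]
    linarith [div_pos two_pos (by linarith : 0 < p)]
  have hμ' : (1 : ℝ) ≤ μ := by exact_mod_cast hμ
  have hexp : (μ : ℝ) - 1 ≤ ((2 * μ - 2 : ℕ) : ℝ) := by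
    rw [Nat.cast_sub (by omega)]
    push_cast
    linarith
  set P : ℂ → Cn n := fun z => ∑ i : Fin μ, z ^ (i : ℕ) • a i
  set w : ℂ → Cn n := fun z => z • v z
  have hP : ContDiff ℝ 1 P := by fun_prop
  have hu₀ : u₀ =ᶠ[𝓝 0] fun z => z ^ μ • P z + z ^ (2 * μ - 2) • w z := by
    filter_upwards [hform] with z hz
    rw [hz, smul_smul, ← pow_succ, show 2 * μ - 2 + 1 = 2 * μ - 1 by omega]
  have hfderiv := fderiv_eventuallyEq_add hu₀
    (.of_forall fun z =>
      (hasFDerivAt_pow_smul μ (hP.differentiable one_ne_zero z).hasFDerivAt).differentiableAt)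
    (hvdiff.mono fun z hz => (hasFDerivAt_pow_smul _ hz.hasFDerivAt).differentiableAt)
  have hQ := (fderiv_pow_smul_sub_isBigO_of_contDiff μ hP).trans
    (isBigO_norm_rpow_of_le (t := μ - 1 + α) (by linarith) (by linarith))
  have hg := (fderiv_pow_smul_sub_isBigO (2 * μ - 2) hα0.le hvdiff hvest).trans
    (isBigO_norm_rpow_of_le (t := μ - 1 + α) (by linarith) (by linarith))
  refine (hQ.add hg).congr' ?_ .rfl
  filter_upwards [hfderiv] with ζ hζ
  rw [hζ, show P 0 = v₀ from (sum_zero_pow_smul hμ a).trans hP0]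
  simp only [w, mulSmul, zero_smul, smul_zero, ContinuousLinearMap.smulRight_zero, sub_zero]
  abel

/-- **Differentiated normal form.** If `u₀(ζ) = ζ^μ P(ζ) + ζ^{2μ-1} v(ζ)` with
`P(ζ) = Σ_{i<μ} aᵢ ζ^i` a polynomial of degree `≤ μ-1`, `P(0) = v₀ ≠ 0`, `v(0) = 0`
and `‖d(ζ v(ζ))‖ = O(|ζ|^α)` with `α = 1 - 2/p`, then
`du₀(ζ) = μ v₀ ζ^{μ-1} + O(|ζ|^{μ-1+α})` as `ζ → 0`. -/
theorem differentiated_normal_form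
    (n : ℕ) (p : ℝ) (hp : 2 < p) (α : ℝ) (hα : α = 1 - 2 / p)
    (μ : ℕ) (hμ : 1 ≤ μ)
    (a : Fin μ → Cn n) (v₀ : Cn n)
    (hP0 : a ⟨0, hμ⟩ = v₀) (hv₀ : v₀ ≠ 0)
    (v u₀ : ℂ → Cn n) (hv0 : v 0 = 0)
    (hvdiff : ∀ᶠ ζ in 𝓝 (0 : ℂ), DifferentiableAt ℝ (fun z : ℂ => z • v z) ζ)
    (hvest : (fun ζ => fderiv ℝ (fun z : ℂ => z • v z) ζ)
      =O[𝓝 (0 : ℂ)] (fun ζ => ‖ζ‖ ^ α))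
    (hudiff : ∀ᶠ ζ in 𝓝 (0 : ℂ), DifferentiableAt ℝ u₀ ζ)
    (hform : ∀ᶠ ζ in 𝓝 (0 : ℂ),
      u₀ ζ = ζ ^ μ • (∑ i : Fin μ, ζ ^ (i : ℕ) • a i) + ζ ^ (2 * μ - 1) • v ζ) :
    (fun ζ : ℂ => fderiv ℝ u₀ ζ - mulSmul n ((μ : ℂ) * ζ ^ (μ - 1)) v₀)
      =O[𝓝 (0 : ℂ)] (fun ζ => ‖ζ‖ ^ ((μ : ℝ) - 1 + α)) :=
  differentiated_normal_form_general n p hp α hα μ hμ a v₀ hP0 v u₀ hvdiff hvest hform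
end
end
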